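/- Let K be a complete discrete valuation field of characteristic 0 whose residue field k has characteristic p > 0, let e = v_K(p) and e_0 = e/(p-1). Assume K contains a primitive p^n-th root of unity. If m > ne + e_0, then U^m k_{q,n} = 0, i.e., the image of U^m K_q^M(K) in K_q^M(K)/p^n vanishes. -/

import Mathlib

set_option autoImplicit false

/-! Milnor K-theory: generators and relations. -/

/-- The subgroup of relations (multilinearity and Steinberg) defining the `q`-th
Milnor K-group of a field `K`. -/
def MilnorKRel (K : Type*) [Field K] (q : ℕ) :
    AddSubgroup (FreeAbelianGroup (Fin q → Kˣ)) :=
  AddSubgroup.closure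
    ({x | ∃ (f : Fin q → Kˣ) (i : Fin q) (a b : Kˣ),
        x = FreeAbelianGroup.of (Function.update f i (a * b))
          - FreeAbelianGroup.of (Function.update f i a)
          - FreeAbelianGroup.of (Function.update f i b)} ∪
     {x | ∃ (f : Fin q → Kˣ) (i j : Fin q), i ≠ j ∧ (f i : K) + (f j : K) = 1 ∧
        x = FreeAbelianGroup.of f})

/-- The `q`-th Milnor K-group `K_q^M(K)` of a field `K`. -/
def MilnorK (K : Type*) [Field K] (q : ℕ) : Type _ :=
  FreeAbelianGroup (Fin q → Kˣ) ⧸ MilnorKRel K q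

instance (K : Type*) [Field K] (q : ℕ) : AddCommGroup (MilnorK K q) :=
  QuotientAddGroup.Quotient.addCommGroup _

/-- The Milnor symbol `{f 0, …, f (q-1)}` in `K_q^M(K)`. -/
def MilnorK.symbol (K : Type*) [Field K] (q : ℕ) (f : Fin q → Kˣ) : MilnorK K q :=
  QuotientAddGroup.mk (FreeAbelianGroup.of f)

/-- `U^m K_q^M(K)`: the subgroup of `K_q^M(K)` generated by symbols
`{1 + m_K^m, K^×, …, K^×}` (for `m ≥ 1`). -/
def UK (O K : Type*) [CommRing O] [IsLocalRing O] [Field K] [Algebra O K] (m q : ℕ) :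
    AddSubgroup (MilnorK K q) :=
  AddSubgroup.closure
    {z | ∃ (f : Fin q → Kˣ) (h0 : 0 < q) (a : O),
      a ∈ (IsLocalRing.maximalIdeal O) ^ m ∧
      (f ⟨0, h0⟩ : K) = 1 + algebraMap O K a ∧ z = MilnorK.symbol K q f}

/-- The subgroup `c·A` of an additive group `A`. -/
def pPowSub (A : Type*) [AddCommGroup A] (c : ℕ) : AddSubgroup A :=
  AddSubgroup.closure {x | ∃ y : A, x = c • y}

/-- `k_{q,n} = K_q^M(K)/p^n` (here `c = p^n`). -/
def kmod (K : Type*) [Field K] (q c : ℕ) : Type _ :=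
  MilnorK K q ⧸ pPowSub (MilnorK K q) c

instance (K : Type*) [Field K] (q c : ℕ) : AddCommGroup (kmod K q c) :=
  QuotientAddGroup.Quotient.addCommGroup _

/-- The projection `K_q^M(K) → k_{q,n}`. -/
def kmod.mk (K : Type*) [Field K] (q c : ℕ) : MilnorK K q →+ kmod K q c :=
  QuotientAddGroup.mk' (pPowSub (MilnorK K q) c)

/-- `U^m k_{q,n}`: the image of `U^m K_q^M(K)` in `k_{q,n} = K_q^M(K)/p^n`
(here `c = p^n`). -/
def Umk (O K : Type*) [CommRing O] [IsLocalRing O] [Field K] [Algebra O K]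
    (m q c : ℕ) : AddSubgroup (kmod K q c) :=
  (UK O K m q).map (kmod.mk K q c)

/-- The class in `U^m k_{q,n}` of an element of `U^m K_q^M(K)`. -/
def Umk.of (O K : Type*) [CommRing O] [IsLocalRing O] [Field K] [Algebra O K]
    (m q c : ℕ) (x : MilnorK K q) (hx : x ∈ UK O K m q) : Umk O K m q c :=
  ⟨kmod.mk K q c x, AddSubgroup.mem_map_of_mem _ hx⟩

/-! `1 + a` with `v(a) ≥ e + t` and `(p - 1) t > e` has a `p`-th root `1 + L` with `v(L) ≥ t`:
Newton's method for `X ^ p - (1 + a)` started at `1` converges `ϖ`-adically, because past the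
linear term the binomial expansion of the correction is divisible by `p d²` or is `d ^ p`.
Iterating `n` times, `1 + a` is a `p ^ n`-th power as soon as `v(a) > n e + e / (p - 1)`, so
every generator `{1 + a, …}` of `U^m K_q^M(K)` is `p ^ n` times a symbol. -/

open IsLocalRing

theorem prime_mul_sq_dvd_add_pow_sub {R : Type*} [CommRing R] {p : ℕ} (hp : p.Prime) (x y : R) :
    (p : R) * y ^ 2 ∣ (x + y) ^ p - x ^ p - p * x ^ (p - 1) * y - y ^ p := by
  obtain ⟨r, rfl⟩ : ∃ r, p = r + 2 := ⟨p - 2, by have := hp.two_le; omega⟩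
  have hmiddle : (x + y) ^ (r + 2) - x ^ (r + 2) - ((r + 2 : ℕ) : R) * x ^ (r + 2 - 1) * y
      - y ^ (r + 2) = ∑ k ∈ Finset.range r, y ^ (k + 2) * x ^ (r - k) * (r + 2).choose (k + 2) := by
    rw [add_comm x, add_pow, Finset.sum_range_succ, Finset.sum_range_succ', Finset.sum_range_succ']
    simp only [Nat.reduceSubDiff, zero_add, pow_one, Nat.add_one_sub_one, Nat.choose_one_right,
      Nat.cast_add, Nat.cast_ofNat, pow_zero, tsub_zero, one_mul, Nat.choose_zero_right,
      Nat.cast_one, mul_one, tsub_self, Nat.choose_self]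
    ring
  rw [hmiddle]
  refine Finset.dvd_sum fun k hk => ?_
  have hchoose : ((r + 2 : ℕ) : R) ∣ ((r + 2).choose (k + 2) : R) :=
    Nat.cast_dvd_cast (hp.dvd_choose_self (by omega) (by simp at hk; omega))
  calc ((r + 2 : ℕ) : R) * y ^ 2 ∣ y ^ 2 * y ^ k * x ^ (r - k) * ((r + 2).choose (k + 2) : R) := by
        rw [mul_comm]
        exact mul_dvd_mul (dvd_mul_of_dvd_left (dvd_mul_right _ _) _) hchoose
    _ = _ := by ring

section Adic

variable {R : Type*} [CommRing R] {ϖ : R}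

theorem mem_span_singleton_pow_smul_top {n : ℕ} {x : R} :
    x ∈ (Ideal.span {ϖ} ^ n • ⊤ : Submodule R R) ↔ ϖ ^ n ∣ x := by
  rw [Ideal.span_singleton_pow, smul_eq_mul, Ideal.mul_top, Ideal.mem_span_singleton]

theorem exists_lim_of_pow_dvd_sub_succ [IsPrecomplete (Ideal.span {ϖ}) R] (f : ℕ → R)
    (hf : ∀ j, ϖ ^ j ∣ f j - f (j + 1)) : ∃ L, ∀ j, ϖ ^ j ∣ f j - L := by
  have hcauchy {i j : ℕ} (hij : i ≤ j) : ϖ ^ i ∣ f i - f j := by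
    induction j, hij using Nat.le_induction with
    | base => simp
    | succ j hij ih =>
      rw [← sub_add_sub_cancel _ (f j)]
      exact dvd_add ih ((pow_dvd_pow ϖ hij).trans (hf j))
  obtain ⟨L, hL⟩ := IsPrecomplete.prec inferInstance (I := Ideal.span {ϖ}) (f := f)
    fun hij => SModEq.sub_mem.2 (mem_span_singleton_pow_smul_top.2 (hcauchy hij))
  exact ⟨L, fun j => mem_span_singleton_pow_smul_top.1 (SModEq.sub_mem.1 (hL j))⟩

theorem exists_lim_of_approx_step [IsPrecomplete (Ideal.span {ϖ}) R] (P : ℕ → R → Prop)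
    {x₀ : R} (h₀ : P 0 x₀) (step : ∀ j x, P j x → ∃ y, P (j + 1) y ∧ ϖ ^ j ∣ x - y) :
    ∃ L, ∀ j, ∃ x, P j x ∧ ϖ ^ j ∣ x - L := by
  choose next hnext hdvd using step
  let s (j : ℕ) : {x // P j x} :=
    Nat.rec (motive := fun j => {x // P j x}) ⟨x₀, h₀⟩ (fun j x => ⟨next j x x.2, hnext j x x.2⟩) j
  obtain ⟨L, hL⟩ := exists_lim_of_pow_dvd_sub_succ (ϖ := ϖ) (fun j => (s j).1)
    fun j => hdvd j _ (s j).2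
  exact ⟨L, fun j => ⟨_, (s j).2, hL j⟩⟩

section Roots

variable {p e : ℕ} {w : Rˣ}

theorem exists_pth_root_approx_succ (hp : p.Prime) (hpw : (p : R) = w * ϖ ^ e) {t j : ℕ}
    (ht : e < (p - 1) * t) {a b : R} (hb : ϖ ^ t ∣ b)
    (hab : ϖ ^ (e + t + j) ∣ (1 + b) ^ p - (1 + a)) :
    ∃ d, ϖ ^ (t + j) ∣ d ∧ ϖ ^ (e + t + j + 1) ∣ (1 + b - d) ^ p - (1 + a) := by
  obtain ⟨c, hc⟩ := hab
  set d : R := ↑w⁻¹ * ϖ ^ (t + j) * c with hd_def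
  have hpd : (p : R) * d = (1 + b) ^ p - (1 + a) := by
    rw [hc, hpw, hd_def]
    linear_combination (ϖ ^ (e + t + j) * c) * w.mul_inv
  have hd : ϖ ^ (t + j) ∣ d := ⟨↑w⁻¹ * c, by ring⟩
  have hpe : ϖ ^ e ∣ (p : R) := ⟨w, by rw [hpw, mul_comm]⟩
  refine ⟨d, hd, ?_⟩
  -- `p * d` is the old error, so the new error consists of these three terms.
  have hsplit : (1 + b - d) ^ p - (1 + a) = p * d * (1 - (1 + b) ^ (p - 1))
      + ((1 + b + -d) ^ p - (1 + b) ^ p - p * (1 + b) ^ (p - 1) * -d - (-d) ^ p) + (-d) ^ p := by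
    linear_combination -hpd
  have ht1 : 1 ≤ t := Nat.pos_of_ne_zero (by rintro rfl; simp at ht)
  rw [hsplit]
  refine dvd_add (dvd_add ?_ ?_) ?_
  · have hb' : ϖ ^ t ∣ 1 - (1 + b) ^ (p - 1) := by
      refine hb.trans (dvd_neg.1 ?_)
      simpa using sub_dvd_pow_sub_pow (1 + b) 1 (p - 1)
    refine (pow_dvd_pow ϖ (by omega : e + t + j + 1 ≤ e + (t + j) + t)).trans ?_
    rw [pow_add, pow_add ϖ e]
    exact mul_dvd_mul (mul_dvd_mul hpe hd) hb'
  · refine (pow_dvd_pow ϖ (by omega : e + t + j + 1 ≤ e + (t + j) * 2)).trans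
      ((?_ : _ ∣ (p : R) * (-d) ^ 2).trans (prime_mul_sq_dvd_add_pow_sub hp _ _))
    rw [pow_add, pow_mul]
    exact mul_dvd_mul hpe (pow_dvd_pow_of_dvd (dvd_neg.2 hd) 2)
  · have hmono : (p - 1) * t ≤ (p - 1) * (t + j) := Nat.mul_le_mul_left _ (by omega)
    have hexp : (t + j) * p = (p - 1) * (t + j) + (t + j) := by
      rw [mul_comm, ← Nat.succ_mul, Nat.succ_eq_add_one, Nat.sub_add_cancel hp.one_le]
    calc ϖ ^ (e + t + j + 1) ∣ ϖ ^ ((t + j) * p) := pow_dvd_pow ϖ (by omega)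
      _ = (ϖ ^ (t + j)) ^ p := pow_mul ϖ (t + j) p
      _ ∣ (-d) ^ p := pow_dvd_pow_of_dvd (dvd_neg.2 hd) p

theorem exists_pth_root_of_pow_dvd [IsAdicComplete (Ideal.span {ϖ}) R] (hp : p.Prime)
    (hpw : (p : R) = w * ϖ ^ e) {t : ℕ} (ht : e < (p - 1) * t) {a : R}
    (ha : ϖ ^ (e + t) ∣ a) : ∃ L, ϖ ^ t ∣ L ∧ (1 + L) ^ p = 1 + a := by
  obtain ⟨L, hL⟩ := exists_lim_of_approx_step (ϖ := ϖ)
    (fun j b => ϖ ^ t ∣ b ∧ ϖ ^ (e + t + j) ∣ (1 + b) ^ p - (1 + a))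
    (x₀ := 0) ⟨dvd_zero _, by simpa using ha⟩ fun j b ⟨hb, hab⟩ => by
      obtain ⟨d, hd, hbd⟩ := exists_pth_root_approx_succ hp hpw ht hb hab
      exact ⟨b - d, ⟨dvd_sub hb ((pow_dvd_pow ϖ (by omega)).trans hd), by rwa [← add_sub_assoc]⟩,
        by simpa using (pow_dvd_pow ϖ (by omega)).trans hd⟩
  refine ⟨L, ?_, ?_⟩
  · obtain ⟨x, ⟨hx, -⟩, hxL⟩ := hL t
    simpa using dvd_sub hx hxL
  · refine (IsHausdorff.eq_iff_smodEq (I := Ideal.span {ϖ})).2 fun j => ?_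
    obtain ⟨x, ⟨-, hx⟩, hxL⟩ := hL j
    rw [SModEq.sub_mem, mem_span_singleton_pow_smul_top, ← sub_add_sub_cancel _ ((1 + x) ^ p)]
    refine dvd_add ?_ ((pow_dvd_pow ϖ (by omega)).trans hx)
    refine (dvd_neg.2 hxL).trans ?_
    simpa using sub_dvd_pow_sub_pow (1 + L) (1 + x) p

theorem exists_pow_pow_eq_one_add [IsAdicComplete (Ideal.span {ϖ}) R] (hp : p.Prime)
    (hpw : (p : R) = w * ϖ ^ e) (n : ℕ) {m : ℕ} (hm : (p - 1) * (n * e) + e < (p - 1) * m)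
    {a : R} (ha : ϖ ^ m ∣ a) : ∃ u, u ^ p ^ n = 1 + a := by
  induction n generalizing m a with
  | zero => exact ⟨1 + a, by simp⟩
  | succ n ih =>
    have hem : e ≤ m := by
      by_contra! h
      have : (p - 1) * m ≤ (p - 1) * ((n + 1) * e) := Nat.mul_le_mul_left _ (by nlinarith)
      omega
    obtain ⟨t, rfl⟩ := Nat.exists_eq_add_of_le hem
    have h1 : (p - 1) * ((n + 1) * e) = (p - 1) * (n * e) + (p - 1) * e := by ring
    have h2 : (p - 1) * (e + t) = (p - 1) * e + (p - 1) * t := by ring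
    obtain ⟨L, hL, hLa⟩ := exists_pth_root_of_pow_dvd hp hpw (t := t) (by omega) ha
    obtain ⟨u, hu⟩ := ih (by omega) hL
    exact ⟨u, by rw [pow_succ, pow_mul, hu, hLa]⟩

end Roots

end Adic

theorem exists_unit_mul_pow_eq_of_mem_pow_of_notMem {R : Type*} [CommRing R] [IsLocalRing R]
    {ϖ x : R} (hϖ : maximalIdeal R = Ideal.span {ϖ}) {e : ℕ} (hx : x ∈ maximalIdeal R ^ e)
    (hx' : x ∉ maximalIdeal R ^ (e + 1)) : ∃ w : Rˣ, x = w * ϖ ^ e := by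
  rw [hϖ, Ideal.span_singleton_pow, Ideal.mem_span_singleton] at hx hx'
  obtain ⟨c, rfl⟩ := hx
  refine ⟨(notMem_maximalIdeal.1 ?_).unit, by rw [IsUnit.unit_spec, mul_comm]⟩
  rw [hϖ, Ideal.mem_span_singleton]
  rintro ⟨c', rfl⟩
  exact hx' ⟨c', by ring⟩

namespace MilnorK

variable {K : Type*} [Field K] {q : ℕ}

theorem symbol_update_mul (f : Fin q → Kˣ) (i : Fin q) (a b : Kˣ) :
    symbol K q (Function.update f i (a * b)) =
      symbol K q (Function.update f i a) + symbol K q (Function.update f i b) := by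
  rw [← sub_eq_zero, sub_add_eq_sub_sub]
  exact (QuotientAddGroup.eq_zero_iff _).2 (AddSubgroup.subset_closure (Or.inl ⟨f, i, a, b, rfl⟩))

theorem symbol_update_pow (f : Fin q → Kˣ) (i : Fin q) (a : Kˣ) (k : ℕ) :
    symbol K q (Function.update f i (a ^ k)) = k • symbol K q (Function.update f i a) := by
  induction k with
  | zero => simpa using symbol_update_mul f i 1 1
  | succ k ih => rw [pow_succ, symbol_update_mul, ih, succ_nsmul]

theorem mk_symbol_eq_zero_of_eq_pow {c : ℕ} (hc : c ≠ 0) (f : Fin q → Kˣ) (i : Fin q) {x : K}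
    (hx : (f i : K) = x ^ c) : kmod.mk K q c (symbol K q f) = 0 := by
  have hx0 : x ≠ 0 := fun h => (f i).ne_zero (by rw [hx, h, zero_pow hc])
  have hf : f = Function.update f i (Units.mk0 x hx0 ^ c) := by
    rw [eq_comm, Function.update_eq_iff]
    exact ⟨Units.ext (by simp [hx]), fun _ _ => rfl⟩
  rw [hf, symbol_update_pow]
  exact (QuotientAddGroup.eq_zero_iff _).2 (AddSubgroup.subset_closure ⟨_, rfl⟩)

end MilnorK

theorem milnor_U_vanishes_general
    (O : Type*) [CommRing O] [IsDomain O] [IsDiscreteValuationRing O]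
    [IsAdicComplete (IsLocalRing.maximalIdeal O) O]
    (K : Type*) [Field K] [Algebra O K]
    (p : ℕ) [Fact p.Prime]
    (e : ℕ)
    (he : (p : O) ∈ (IsLocalRing.maximalIdeal O) ^ e ∧
          (p : O) ∉ (IsLocalRing.maximalIdeal O) ^ (e + 1))
    (q n m : ℕ)
    (hm : (n : ℚ) * (e : ℚ) + (e : ℚ) / ((p : ℚ) - 1) < (m : ℚ)) :
    Umk O K m q (p ^ n) = ⊥ := by
  have hp : p.Prime := Fact.out
  obtain ⟨ϖ, hϖ⟩ := IsDiscreteValuationRing.exists_irreducible O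
  have hmax := (IsDiscreteValuationRing.irreducible_iff_uniformizer ϖ).1 hϖ
  have : IsAdicComplete (Ideal.span {ϖ}) O := hmax ▸ inferInstance
  obtain ⟨w, hpw⟩ := exists_unit_mul_pow_eq_of_mem_pow_of_notMem hmax he.1 he.2
  have hnat : (p - 1) * (n * e) + e < (p - 1) * m := by
    have hp1 : (0 : ℚ) < p - 1 := by linarith [show (2 : ℚ) ≤ p by exact_mod_cast hp.two_le]
    have key : ((p - 1 : ℕ) : ℚ) * (n * e) + e < ((p - 1 : ℕ) : ℚ) * m := by
      rw [Nat.cast_sub hp.one_le, Nat.cast_one]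
      have := mul_lt_mul_of_pos_left hm hp1
      rwa [mul_add, mul_div_cancel₀ _ hp1.ne'] at this
    exact_mod_cast key
  rw [eq_bot_iff, Umk, AddSubgroup.map_le_iff_le_comap, UK, AddSubgroup.closure_le]
  rintro _ ⟨f, hq, a, ha, hfa, rfl⟩
  rw [hmax, Ideal.span_singleton_pow, Ideal.mem_span_singleton] at ha
  obtain ⟨u, hu⟩ := exists_pow_pow_eq_one_add hp hpw n hnat ha
  exact MilnorK.mk_symbol_eq_zero_of_eq_pow (pow_ne_zero n hp.ne_zero) f ⟨0, hq⟩
    (x := algebraMap O K u) (by rw [hfa, ← map_pow, hu, map_add, map_one])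

/-- **Theorem (iii).** Let `K` be a complete discrete valuation field of characteristic
`0` whose residue field has characteristic `p > 0`, `e = v_K(p)`, `e₀ = e/(p-1)`.
Assume `K` contains a primitive `p^n`-th root of unity.  If `m > n·e + e₀`, then
`U^m k_{q,n} = 0`. -/
theorem milnor_U_vanishes
    (O : Type*) [CommRing O] [IsDomain O] [IsDiscreteValuationRing O]
    [IsAdicComplete (IsLocalRing.maximalIdeal O) O]
    (K : Type*) [Field K] [Algebra O K] [IsFractionRing O K] [CharZero K]
    (p : ℕ) [Fact p.Prime] [CharP (IsLocalRing.ResidueField O) p]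
    (e : ℕ)
    (he : (p : O) ∈ (IsLocalRing.maximalIdeal O) ^ e ∧
          (p : O) ∉ (IsLocalRing.maximalIdeal O) ^ (e + 1))
    (q n m : ℕ)
    (ζ : K) (hζ : IsPrimitiveRoot ζ (p ^ n))
    (hm : (n : ℚ) * (e : ℚ) + (e : ℚ) / ((p : ℚ) - 1) < (m : ℚ)) :
    Umk O K m q (p ^ n) = ⊥ :=
  milnor_U_vanishes_general O K p e he q n m hm
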